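/- arXiv:1811.12559 — 4 statements merged into one kernel-verified Lean document; each statement's English description precedes it below -/
import Mathlib

section
/- Fix p, q ∈ ℝ² unit vectors and a ∈ ℝ, and define F(θ) = a + 2 p ∧ π_{V_θ}(q). Then for every θ, |F′(θ)/2|² + |F″(θ)/4|² = 1. -/
open Real MeasureTheory

noncomputable section

/-- Points of the plane. -/
abbrev Pt := ℝ × ℝ
/-- Points of the Heisenberg group ℍ ≅ ℂ × ℝ ≅ ℝ² × ℝ. -/
abbrev Heis := (ℝ × ℝ) × ℝ

/-- Wedge product on ℝ². -/
def wedge (z w : Pt) : ℝ := z.1 * w.2 - z.2 * w.1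

/-- Euclidean inner product on ℝ². -/
def dotP (z w : Pt) : ℝ := z.1 * w.1 + z.2 * w.2

/-- Euclidean norm on ℝ². -/
def nrm (z : Pt) : ℝ := Real.sqrt (z.1 ^ 2 + z.2 ^ 2)

/-- The unit vector e^{iθ} = (cos θ, sin θ). -/
def eV (θ : ℝ) : Pt := (Real.cos θ, Real.sin θ)

/-- The unit vector i·e^{iθ} = (−sin θ, cos θ). -/
def ieV (θ : ℝ) : Pt := (-Real.sin θ, Real.cos θ)

/-- Orthogonal projection onto the line V_θ spanned by e^{iθ}. -/
def projV (θ : ℝ) (z : Pt) : Pt := (dotP z (eV θ)) • eV θ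

/-- Orthogonal projection onto the orthogonal complement V_θ^⊥, spanned by i·e^{iθ}. -/
def projVperp (θ : ℝ) (z : Pt) : Pt := (dotP z (ieV θ)) • ieV θ

/-- Heisenberg group law. -/
def hmul (v w : Heis) : Heis := (v.1 + w.1, v.2 + w.2 - 2 * wedge v.1 w.1)

/-- Heisenberg group inverse. -/
def hinv (v : Heis) : Heis := (-v.1, -v.2)

/-- Korányi norm ‖(z,t)‖ = (|z|⁴ + t²)^{1/4}. -/
def Knorm (v : Heis) : ℝ := ((nrm v.1) ^ 4 + v.2 ^ 2) ^ ((1 : ℝ) / 4)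

/-- Korányi distance (via the explicit second-component formula). -/
def dH (v w : Heis) : ℝ :=
  ((nrm (v.1 - w.1)) ^ 4 + (v.2 - w.2 - 2 * wedge v.1 w.1) ^ 2) ^ ((1 : ℝ) / 4)

/-- Horizontal projection P_{V_θ}. -/
def PV (θ : ℝ) (v : Heis) : Heis := (projV θ v.1, 0)

/-- Vertical projection P_{V_θ^⊥}. -/
def PVperp (θ : ℝ) (v : Heis) : Heis :=
  (projVperp θ v.1, v.2 - 2 * wedge (projV θ v.1) (projVperp θ v.1))

/-! `2 p ∧ π_{V_θ}(q)` is `p ∧ q` plus a pure second harmonic `A sin 2θ + B cos 2θ`, where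
`(A, -B)` is the complex product `p q`, so its amplitude `A² + B²` is `|p|² |q|² = 1`. For such a
harmonic, `F′/2` and `F″/4` are the same harmonic shifted by a quarter period, so their squares
add up to the squared amplitude. -/

def secondHarmonic (c A B θ : ℝ) : ℝ := c + A * sin (2 * θ) + B * cos (2 * θ)

theorem hasDerivAt_secondHarmonic (c A B θ : ℝ) :
    HasDerivAt (secondHarmonic c A B) (secondHarmonic 0 (-(2 * B)) (2 * A) θ) θ := by
  have h2 : HasDerivAt (fun x : ℝ => 2 * x) 2 θ := by
    simpa using (hasDerivAt_id θ).const_mul 2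
  have hsin := ((hasDerivAt_sin (2 * θ)).comp θ h2).const_mul A
  have hcos := ((hasDerivAt_cos (2 * θ)).comp θ h2).const_mul B
  exact ((hsin.const_add c).add hcos).congr_deriv (by simp only [secondHarmonic]; ring)

theorem deriv_secondHarmonic (c A B : ℝ) :
    deriv (secondHarmonic c A B) = secondHarmonic 0 (-(2 * B)) (2 * A) :=
  funext fun θ => (hasDerivAt_secondHarmonic c A B θ).deriv

theorem sq_abs_deriv_add_sq_abs_deriv_deriv_secondHarmonic (c A B θ : ℝ) :
    |deriv (secondHarmonic c A B) θ / 2| ^ 2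
      + |deriv (deriv (secondHarmonic c A B)) θ / 4| ^ 2 = A ^ 2 + B ^ 2 := by
  simp only [deriv_secondHarmonic, secondHarmonic, sq_abs]
  linear_combination (A ^ 2 + B ^ 2) * sin_sq_add_cos_sq (2 * θ)

theorem two_mul_wedge_projV (p q : Pt) (θ : ℝ) :
    2 * wedge p (projV θ q)
      = secondHarmonic (wedge p q) (p.1 * q.1 - p.2 * q.2) (-(p.1 * q.2 + p.2 * q.1)) θ := by
  simp only [secondHarmonic, wedge, projV, dotP, eV, Prod.smul_fst, Prod.smul_snd, smul_eq_mul,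
    sin_two_mul, cos_two_mul']
  linear_combination (p.1 * q.2 - p.2 * q.1) * sin_sq_add_cos_sq θ

theorem nrm_sq (z : Pt) : nrm z ^ 2 = z.1 ^ 2 + z.2 ^ 2 :=
  sq_sqrt (by positivity)

/-- For F(θ) = a + 2 p ∧ π_{V_θ}(q) with p, q unit vectors:
|F′(θ)/2|² + |F″(θ)/4|² = 1. -/
theorem stmt_7 (p q : Pt) (hp : nrm p = 1) (hq : nrm q = 1) (a : ℝ)
    (F : ℝ → ℝ) (hF : ∀ θ, F θ = a + 2 * wedge p (projV θ q)) (θ : ℝ) :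
    |deriv F θ / 2| ^ 2 + |deriv (deriv F) θ / 4| ^ 2 = 1 := by
  have hF_eq : F = secondHarmonic (a + wedge p q) (p.1 * q.1 - p.2 * q.2)
      (-(p.1 * q.2 + p.2 * q.1)) := by
    funext x
    rw [hF, two_mul_wedge_projV]
    simp only [secondHarmonic]
    ring
  rw [hF_eq, sq_abs_deriv_add_sq_abs_deriv_deriv_secondHarmonic]
  have hpq : nrm p ^ 2 * nrm q ^ 2 = 1 := by rw [hp, hq]; norm_num
  rw [nrm_sq, nrm_sq] at hpq
  linear_combination hpq
end
end

section
/- Let F: ℝ → ℝ be twice continuously differentiable with |F′(θ)/2|² + |F″(θ)/4|² = 1 for all θ. Then for any b ∈ ℝ and any interval I of length strictly less than 1/2, the equation F(θ) = b has at most 2 solutions in I. -/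
open Real MeasureTheory

noncomputable section

theorem Set.exists_lt_lt_of_two_lt_encard {α : Type*} [LinearOrder α] {s : Set α}
    (hs : 2 < s.encard) : ∃ x ∈ s, ∃ y ∈ s, ∃ z ∈ s, x < y ∧ y < z := by
  obtain ⟨t, hts, ht⟩ := Set.exists_subset_encard_eq (Order.add_one_le_of_lt hs)
  obtain ⟨u, rfl⟩ := (Set.finite_of_encard_eq_coe ht).exists_finset_coe
  have hu : u.card = 3 := by exact_mod_cast ht
  set e := u.orderEmbOfFin hu
  have he : ∀ i, e i ∈ s := fun i => hts (u.orderEmbOfFin_mem hu i)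
  exact ⟨e 0, he 0, e 1, he 1, e 2, he 2, e.strictMono (by decide), e.strictMono (by decide)⟩

section

variable {F : ℝ → ℝ}
  (hid : ∀ θ, (deriv F θ / 2) ^ 2 + (deriv (deriv F) θ / 4) ^ 2 = 1)
include hid

theorem abs_deriv_deriv_le_four (θ : ℝ) : |deriv (deriv F) θ| ≤ 4 := by
  have := hid θ
  exact abs_le_of_sq_le_sq (by nlinarith) (by norm_num)

theorem abs_deriv_eq_two_of_deriv_deriv_eq_zero {θ : ℝ} (h : deriv (deriv F) θ = 0) :
    |deriv F θ| = 2 := by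
  have := hid θ
  rw [h] at this
  have : deriv F θ ^ 2 = 2 ^ 2 := by linarith
  simpa using (sq_eq_sq_iff_abs_eq_abs _ _).1 this

theorem lipschitzWith_deriv (hF : Differentiable ℝ (deriv F)) : LipschitzWith 4 (deriv F) :=
  lipschitzWith_of_nnnorm_deriv_le hF fun θ => by
    rw [← NNReal.coe_le_coe, coe_nnnorm, Real.norm_eq_abs]
    exact_mod_cast abs_deriv_deriv_le_four hid θ

/-- Between two critical points Rolle gives an inflection point, where `|F'| = 2`; since
`|F''| ≤ 4`, getting there from a critical point takes a distance of more than `1/2`. -/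
theorem half_lt_sub_of_deriv_eq_zero (hF : Differentiable ℝ (deriv F)) {ξ₁ ξ₂ : ℝ}
    (hξ : ξ₁ < ξ₂) (h₁ : deriv F ξ₁ = 0) (h₂ : deriv F ξ₂ = 0) : 1 / 2 < ξ₂ - ξ₁ := by
  obtain ⟨η, ⟨hξ₁η, hηξ₂⟩, hη⟩ :=
    exists_deriv_eq_zero hξ hF.continuous.continuousOn (h₁.trans h₂.symm)
  have hlip := (lipschitzWith_deriv hid hF).dist_le_mul η ξ₁
  rw [Real.dist_eq, Real.dist_eq, h₁, sub_zero,
    abs_deriv_eq_two_of_deriv_deriv_eq_zero hid hη, abs_of_pos (sub_pos.2 hξ₁η)] at hlip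
  push_cast at hlip
  linarith

theorem half_lt_sub_of_eq_of_eq (hF₁ : Continuous F) (hF₂ : Differentiable ℝ (deriv F))
    {x y z : ℝ} (hxy : x < y) (hyz : y < z) (hx : F x = F y) (hz : F y = F z) :
    1 / 2 < z - x := by
  obtain ⟨ξ₁, ⟨hxξ₁, hξ₁y⟩, h₁⟩ := exists_deriv_eq_zero hxy hF₁.continuousOn hx
  obtain ⟨ξ₂, ⟨hyξ₂, hξ₂z⟩, h₂⟩ := exists_deriv_eq_zero hyz hF₁.continuousOn hz
  linarith [half_lt_sub_of_deriv_eq_zero hid hF₂ (hξ₁y.trans hyξ₂) h₁ h₂]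

end

/-- If F is C² with |F′/2|² + |F″/4|² ≡ 1, then F(θ) = b has at most 2 solutions
in any interval of length strictly less than 1/2. -/
theorem stmt_9 (F : ℝ → ℝ) (hF : ContDiff ℝ 2 F)
    (hid : ∀ θ : ℝ, (deriv F θ / 2) ^ 2 + (deriv (deriv F) θ / 4) ^ 2 = 1)
    (b : ℝ) (a c : ℝ) (hlen : c - a < 1 / 2) :
    Set.encard {θ ∈ Set.Icc a c | F θ = b} ≤ 2 := by
  have hF₂ : Differentiable ℝ (deriv F) := (hF.iterate_deriv' 1 1).differentiable one_ne_zero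
  by_contra! h
  obtain ⟨x, ⟨hxI, hx⟩, y, ⟨-, hy⟩, z, ⟨hzI, hz⟩, hxy, hyz⟩ :=
    Set.exists_lt_lt_of_two_lt_encard h
  have hspread : 1 / 2 < z - x :=
    half_lt_sub_of_eq_of_eq hid hF.continuous hF₂ hxy hyz (hx.trans hy.symm) (hy.trans hz.symm)
  linarith [hxI.1, hzI.2]
end
end

section
/- For any v = (z,t), w = (ζ,τ) ∈ ℍ and θ ∈ [0,π), if z ≠ ±ζ then d_ℍ(P_{V_θ^⊥}(v), P_{V_θ^⊥}(w)) ≥ |z+ζ|^{1/2} |z−ζ|^{1/2} |a + 2p ∧ π_{V_θ}(q)|^{1/2}, where a = (t−τ−2z∧ζ)/(|z+ζ| |z−ζ|), p = (z−ζ)/|z−ζ|, q = (z+ζ)/|z+ζ|. -/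
open Real MeasureTheory

noncomputable section

/-!
The height difference of the vertical projections equals
`t - τ - 2 z ∧ ζ + 2 (z - ζ) ∧ π_{V_θ}(z + ζ)`: split `z ∧ ζ` along `V_θ ⊕ V_θ^⊥`, use that
`V_θ^⊥`-components wedge to zero and that only the `V_θ^⊥`-part of `z - ζ` sees `π_{V_θ}(z + ζ)`.
Rescaling `z - ζ` and `z + ζ` to unit vectors divides this quantity by `|z + ζ| |z - ζ|`, which
the prefactor `|z + ζ|^{1/2} |z - ζ|^{1/2}` undoes (when `z = ±ζ`, `0⁻¹ = 0` makes the left side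
vanish), and the Korányi distance dominates the square root of the absolute value of its height
component.
-/

section PlaneProjections

variable (θ : ℝ) (c : ℝ) (x y z w : Pt)

lemma wedge_comm : wedge z w = -wedge w z := by
  simp only [wedge]; ring

lemma wedge_smul_left : wedge (c • z) w = c * wedge z w := by
  simp only [wedge, Prod.smul_fst, Prod.smul_snd, smul_eq_mul]; ring

lemma wedge_smul_right : wedge z (c • w) = c * wedge z w := by
  simp only [wedge, Prod.smul_fst, Prod.smul_snd, smul_eq_mul]; ring

lemma wedge_add_right : wedge z (x + y) = wedge z x + wedge z y := by
  simp only [wedge, Prod.fst_add, Prod.snd_add]; ring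

lemma wedge_sub_left : wedge (x - y) w = wedge x w - wedge y w := by
  simp only [wedge, Prod.fst_sub, Prod.snd_sub]; ring

lemma projV_smul : projV θ (c • z) = c • projV θ z := by
  simp only [projV, dotP, Prod.smul_fst, Prod.smul_snd, smul_eq_mul, smul_smul]; ring_nf

lemma projV_add : projV θ (x + y) = projV θ x + projV θ y := by
  simp only [projV, dotP, Prod.fst_add, Prod.snd_add, ← add_smul]; ring_nf

lemma projVperp_sub : projVperp θ (x - y) = projVperp θ x - projVperp θ y := by
  simp only [projVperp, dotP, Prod.fst_sub, Prod.snd_sub, ← sub_smul]; ring_nf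

lemma wedge_projVperp_projVperp : wedge (projVperp θ z) (projVperp θ w) = 0 := by
  simp only [wedge, projVperp, Prod.smul_fst, Prod.smul_snd, smul_eq_mul]; ring

lemma wedge_projVperp_projV : wedge (projVperp θ x) (projV θ y) = wedge x (projV θ y) := by
  simp only [wedge, projV, projVperp, dotP, eV, ieV, Prod.smul_fst, Prod.smul_snd, smul_eq_mul]
  linear_combination (-(x.1 * -sin θ + x.2 * cos θ) * (y.1 * cos θ + y.2 * sin θ)) *
    (sin_sq_add_cos_sq θ)

lemma wedge_eq_wedge_projV_projVperp_sub :
    wedge z w = wedge (projV θ z) (projVperp θ w) - wedge (projV θ w) (projVperp θ z) := by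
  simp only [wedge, projV, projVperp, dotP, eV, ieV, Prod.smul_fst, Prod.smul_snd, smul_eq_mul]
  linear_combination (-(z.1 * w.2 - z.2 * w.1) * (1 + sin θ ^ 2 + cos θ ^ 2)) *
    (sin_sq_add_cos_sq θ)

end PlaneProjections

lemma nrm_nonneg (z : Pt) : 0 ≤ nrm z := Real.sqrt_nonneg _

lemma PVperp_height_sub (θ : ℝ) (v w : Heis) :
    (PVperp θ v).2 - (PVperp θ w).2 - 2 * wedge (PVperp θ v).1 (PVperp θ w).1 =
      v.2 - w.2 - 2 * wedge v.1 w.1 + 2 * wedge (v.1 - w.1) (projV θ (v.1 + w.1)) := by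
  simp only [PVperp]
  rw [wedge_projVperp_projVperp, ← wedge_projVperp_projV θ (v.1 - w.1), projVperp_sub, projV_add,
    wedge_sub_left, wedge_add_right, wedge_add_right, wedge_eq_wedge_projV_projVperp_sub θ v.1 w.1,
    wedge_comm (projVperp θ v.1) (projV θ v.1), wedge_comm (projVperp θ w.1) (projV θ w.1),
    wedge_comm (projVperp θ v.1) (projV θ w.1), wedge_comm (projVperp θ w.1) (projV θ v.1)]
  ring

lemma rpow_half_abs_height_le_dH (v w : Heis) :
    |v.2 - w.2 - 2 * wedge v.1 w.1| ^ ((1 : ℝ) / 2) ≤ dH v w := by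
  set S := v.2 - w.2 - 2 * wedge v.1 w.1
  calc |S| ^ ((1 : ℝ) / 2) = (|S| ^ 2) ^ ((1 : ℝ) / 4) := by
        rw [← rpow_natCast, ← rpow_mul (abs_nonneg S)]; norm_num
    _ = (S ^ 2) ^ ((1 : ℝ) / 4) := by rw [sq_abs]
    _ ≤ dH v w :=
        rpow_le_rpow (sq_nonneg S) (le_add_of_nonneg_left (by positivity)) (by norm_num)

lemma div_mul_add_wedge_inv_smul_projV_inv_smul (θ X a b : ℝ) (d s : Pt) :
    X / (a * b) + 2 * wedge (b⁻¹ • d) (projV θ (a⁻¹ • s)) =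
      (X + 2 * wedge d (projV θ s)) / (a * b) := by
  rw [projV_smul, wedge_smul_left, wedge_smul_right]
  ring

lemma rpow_mul_abs_div_rpow_le {x p : ℝ} (hx : 0 ≤ x) (hp : 0 ≤ p) (S : ℝ) :
    x ^ p * |S / x| ^ p ≤ |S| ^ p := by
  rw [← mul_rpow hx (abs_nonneg _)]
  refine rpow_le_rpow (by positivity) ?_ hp
  rw [abs_div, abs_of_nonneg hx]
  rcases hx.eq_or_lt with rfl | hx
  · simp
  · rw [mul_div_cancel₀ _ hx.ne']

theorem stmt_13_general (v w : Heis) (θ : ℝ) :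
    (nrm (v.1 + w.1)) ^ ((1 : ℝ) / 2) * (nrm (v.1 - w.1)) ^ ((1 : ℝ) / 2) *
      |(v.2 - w.2 - 2 * wedge v.1 w.1) / (nrm (v.1 + w.1) * nrm (v.1 - w.1)) +
        2 * wedge ((nrm (v.1 - w.1))⁻¹ • (v.1 - w.1))
          (projV θ ((nrm (v.1 + w.1))⁻¹ • (v.1 + w.1)))| ^ ((1 : ℝ) / 2)
      ≤ dH (PVperp θ v) (PVperp θ w) := by
  rw [div_mul_add_wedge_inv_smul_projV_inv_smul, ← PVperp_height_sub,
    ← mul_rpow (nrm_nonneg _) (nrm_nonneg _)]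
  exact (rpow_mul_abs_div_rpow_le (mul_nonneg (nrm_nonneg _) (nrm_nonneg _)) (by norm_num) _).trans
    (rpow_half_abs_height_le_dH _ _)

/-- Lower bound for the distance between vertical projections when z ≠ ±ζ. -/
theorem stmt_13 (v w : Heis) (θ : ℝ) (hθ : θ ∈ Set.Ico 0 Real.pi)
    (h1 : v.1 ≠ w.1) (h2 : v.1 ≠ -w.1) :
    (nrm (v.1 + w.1)) ^ ((1 : ℝ) / 2) * (nrm (v.1 - w.1)) ^ ((1 : ℝ) / 2) *
      |(v.2 - w.2 - 2 * wedge v.1 w.1) / (nrm (v.1 + w.1) * nrm (v.1 - w.1)) +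
        2 * wedge ((nrm (v.1 - w.1))⁻¹ • (v.1 - w.1))
          (projV θ ((nrm (v.1 + w.1))⁻¹ • (v.1 + w.1)))| ^ ((1 : ℝ) / 2)
      ≤ dH (PVperp θ v) (PVperp θ w) :=
  stmt_13_general v w θ
end
end

section
/- Let X, Y be metric spaces with X compact and Y separable, μ a finite Borel measure on X, ν a nonzero finite compactly supported Borel measure on Y, and (θ,y) ↦ π_θ(y) a continuous map X × Y → Y. Given s > 0, suppose there exist η, δ₀ > 0 such that for all δ ∈ (0,δ₀): ν{y ∈ Y : μ{θ ∈ X : π_{θ#}ν(B(π_θ(y),δ)) ≥ δ^s} ≥ δ^η} ≤ δ^η. Then for μ-a.e. θ ∈ X, the Hausdorff dimension of π_θ(supp ν) is at least s. -/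
/-!
By Fubini, the hypothesis bounds the `μ × ν`-measure of the pairs `(θ, y)` for which the ball
`B(π_θ y, δ)` carries `π_θ#ν`-mass at least `δ ^ s` by a constant times `δ ^ η`. Along the scales
`δ_k = δ₀ 2^(-k-1)` these bounds are summable, so by Borel–Cantelli, for `μ`-a.e. `θ` and
`ν`-a.e. `y`, the balls `B(π_θ y, δ_k)` have mass `< δ_k ^ s` for all large `k`. Restricting `ν`
to a set of positive measure on which this holds from a fixed scale on, its pushforward is a
Frostman measure of exponent `s` carried by `π_θ (supp ν)`, and the mass distribution principle
gives `μH[s] (π_θ (supp ν)) > 0`.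
-/

open MeasureTheory

noncomputable section

/-- The support of a Borel measure on a metric space: points all of whose
neighbourhoods have positive measure. -/
def measSupp {Y : Type} [MetricSpace Y] [MeasurableSpace Y] (ν : Measure Y) : Set Y :=
  {y : Y | ∀ r : ℝ, 0 < r → 0 < ν (Metric.ball y r)}

open Metric Filter Set
open scoped ENNReal Topology

theorem measSupp_eq_support {Y : Type} [MetricSpace Y] [MeasurableSpace Y] (ν : Measure Y) :
    measSupp ν = ν.support :=
  Set.ext fun _ => (nhds_basis_ball.mem_measureSupport).symm

/-- The mass distribution principle. -/
theorem inv_smul_le_hausdorffMeasure_of_measure_closedBall_le {Y : Type*} [MetricSpace Y]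
    [MeasurableSpace Y] [BorelSpace Y] (ρ : Measure Y) {s r₀ : ℝ} {C : ℝ≥0∞} (hC : C ≠ ∞)
    (hr₀ : 0 < r₀) (h : ∀ x, ∀ r ∈ Ioo 0 r₀, ρ (closedBall x r) ≤ C * ENNReal.ofReal r ^ s) :
    C⁻¹ • ρ ≤ μH[s] := by
  refine Measure.le_hausdorffMeasure s _ (ENNReal.ofReal (r₀ / 2)) (by positivity) fun U hU => ?_
  rcases U.eq_empty_or_nonempty with rfl | ⟨x, hx⟩
  · simp
  set d := (ediam U).toReal
  have hd0 : 0 ≤ d := ENNReal.toReal_nonneg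
  have hdU : ENNReal.ofReal d = ediam U :=
    ENNReal.ofReal_toReal (ne_top_of_le_ne_top ENNReal.ofReal_ne_top hU)
  have hd : d < r₀ := (ENNReal.toReal_le_of_le_ofReal (by positivity) hU).trans_lt (by linarith)
  have hball : ∀ r ∈ Ioo d r₀, ρ U ≤ C * ENNReal.ofReal r ^ s := fun r hr =>
    calc ρ U ≤ ρ (closedBall x r) := measure_mono fun y hy => by
          rw [mem_closedBall, ← edist_le_ofReal (hd0.trans hr.1.le)]
          exact (edist_le_ediam_of_mem hy hx).trans (hdU ▸ ENNReal.ofReal_le_ofReal hr.1.le)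
      _ ≤ _ := h x r ⟨hd0.trans_lt hr.1, hr.2⟩
  -- The hypothesis covers only radii `r > 0`, while `ediam U` may vanish: pass to `r → d⁺`.
  have hlim : Tendsto (fun r => C * ENNReal.ofReal r ^ s) (𝓝[>] d) (𝓝 (C * ediam U ^ s)) :=
    hdU ▸ ENNReal.Tendsto.const_mul ((ENNReal.continuous_rpow_const.comp
      ENNReal.continuous_ofReal).tendsto d |>.mono_left nhdsWithin_le_nhds) (Or.inr hC)
  have hρU : ρ U ≤ C * ediam U ^ s :=
    ge_of_tendsto hlim (mem_of_superset (Ioo_mem_nhdsGT hd) hball)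
  calc (C⁻¹ • ρ) U ≤ C⁻¹ * (C * ediam U ^ s) := by
        rw [Measure.smul_apply, smul_eq_mul]; gcongr
    _ ≤ ediam U ^ s := by
        rw [← mul_assoc]; exact mul_le_of_le_one_left zero_le (ENNReal.inv_mul_le_one C)

theorem le_two_rpow_mul_of_le_dyadic {φ : ℝ → ℝ≥0∞} (hφ : Monotone φ) {c s : ℝ} (hc : 0 < c)
    (hs : 0 ≤ s) {N : ℕ} (h : ∀ k ≥ N, φ (c * 2⁻¹ ^ k) ≤ ENNReal.ofReal (c * 2⁻¹ ^ k) ^ s) :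
    ∀ r ∈ Ioc 0 (c * 2⁻¹ ^ N), φ r ≤ 2 ^ s * ENNReal.ofReal r ^ s := by
  rintro r ⟨hr0, hrN⟩
  have hrc : r / c ≤ 2⁻¹ ^ N := (div_le_iff₀' hc).2 hrN
  obtain ⟨n, hn_lt, hn_le⟩ := exists_nat_pow_near_of_lt_one (div_pos hr0 hc)
    (hrc.trans (pow_le_one₀ (by norm_num) (by norm_num))) (by norm_num : (0 : ℝ) < 2⁻¹)
    (by norm_num)
  have hNn : N ≤ n := by
    by_contra! hnN
    exact (hn_lt.trans_le hrc).not_ge (pow_le_pow_of_le_one (by norm_num) (by norm_num) hnN)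
  have hr_le : r ≤ c * 2⁻¹ ^ n := (div_le_iff₀' hc).1 hn_le
  have h_le_two_r : c * 2⁻¹ ^ n ≤ 2 * r := by
    have := (lt_div_iff₀' hc).1 hn_lt
    rw [pow_succ] at this
    linarith
  calc φ r ≤ φ (c * 2⁻¹ ^ n) := hφ hr_le
    _ ≤ ENNReal.ofReal (c * 2⁻¹ ^ n) ^ s := h n hNn
    _ ≤ ENNReal.ofReal (2 * r) ^ s := by gcongr
    _ = 2 ^ s * ENNReal.ofReal r ^ s := by
        rw [ENNReal.ofReal_mul zero_le_two, ENNReal.ofReal_ofNat, ENNReal.mul_rpow_of_nonneg _ _ hs]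

/-- A ball meeting `f '' G` in `f y` lies in the ball of twice the radius about `f y`. -/
theorem map_restrict_closedBall_le {Z Y : Type*} [MeasurableSpace Z] [MetricSpace Y]
    [MeasurableSpace Y] [OpensMeasurableSpace Y] {f : Z → Y} (hf : Measurable f) (ν : Measure Z)
    (G : Set Z) {s r₀ : ℝ} (hs : 0 ≤ s) {C : ℝ≥0∞}
    (h : ∀ y ∈ G, ∀ r ∈ Ioo 0 r₀, ν (f ⁻¹' closedBall (f y) r) ≤ C * ENNReal.ofReal r ^ s) :
    ∀ x, ∀ r ∈ Ioo 0 (r₀ / 2),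
      (ν.restrict G).map f (closedBall x r) ≤ 2 ^ s * C * ENNReal.ofReal r ^ s := by
  rintro x r ⟨hr0, hr⟩
  rw [Measure.map_apply hf measurableSet_closedBall,
    Measure.restrict_apply (hf measurableSet_closedBall)]
  rcases (f ⁻¹' closedBall x r ∩ G).eq_empty_or_nonempty with he | ⟨y, hyx, hyG⟩
  · simp [he]
  have hsub : closedBall x r ⊆ closedBall (f y) (2 * r) :=
    closedBall_subset_closedBall' (by rw [dist_comm]; linarith [mem_closedBall.1 hyx])
  calc ν (f ⁻¹' closedBall x r ∩ G) ≤ ν (f ⁻¹' closedBall (f y) (2 * r)) :=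
        measure_mono (inter_subset_left.trans (preimage_mono hsub))
    _ ≤ C * ENNReal.ofReal (2 * r) ^ s := h y hyG (2 * r) ⟨by positivity, by linarith⟩
    _ = 2 ^ s * C * ENNReal.ofReal r ^ s := by
        rw [ENNReal.ofReal_mul zero_le_two, ENNReal.ofReal_ofNat,
          ENNReal.mul_rpow_of_nonneg _ _ hs]
        ring

theorem hausdorffMeasure_image_ne_zero_of_ae_eventually_le {Z Y : Type*} [MeasurableSpace Z]
    [MetricSpace Y] [MeasurableSpace Y] [BorelSpace Y] {f : Z → Y} (hf : Measurable f)
    {ν : Measure Z} {c s : ℝ} (hc : 0 < c) (hs : 0 ≤ s)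
    (h : ∀ᵐ y ∂ν, ∀ᶠ k in atTop,
      ν (f ⁻¹' closedBall (f y) (c * 2⁻¹ ^ k)) ≤ ENNReal.ofReal (c * 2⁻¹ ^ k) ^ s)
    {K : Set Z} (hK : ν K ≠ 0) : μH[s] (f '' K) ≠ 0 := by
  set G : ℕ → Set Z := fun N => {y | ∀ k ≥ N,
    ν (f ⁻¹' closedBall (f y) (c * 2⁻¹ ^ k)) ≤ ENNReal.ofReal (c * 2⁻¹ ^ k) ^ s}
  obtain ⟨N, hN⟩ : ∃ N, ν (K ∩ G N) ≠ 0 := by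
    by_contra! hzero
    have hG : ν (⋃ N, G N)ᶜ = 0 := h.mono fun y hy => mem_iUnion.2 (eventually_atTop.1 hy)
    exact hK (measure_inter_conull hG ▸ inter_iUnion K G ▸ measure_iUnion_null hzero)
  have hfrost : ∀ y ∈ G N, ∀ r ∈ Ioo 0 (c * 2⁻¹ ^ N),
      ν (f ⁻¹' closedBall (f y) r) ≤ 2 ^ s * ENNReal.ofReal r ^ s := fun y hy r hr =>
    le_two_rpow_mul_of_le_dyadic (fun _ _ hrr' => measure_mono (preimage_mono
      (closedBall_subset_closedBall hrr'))) hc hs hy r (Ioo_subset_Ioc_self hr)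
  set ρ := (ν.restrict (G N)).map f
  have hC : (2 : ℝ≥0∞) ^ s * 2 ^ s ≠ ∞ := ENNReal.mul_ne_top
    (ENNReal.rpow_ne_top_of_nonneg hs ENNReal.ofNat_ne_top)
    (ENNReal.rpow_ne_top_of_nonneg hs ENNReal.ofNat_ne_top)
  have hρ : ((2 : ℝ≥0∞) ^ s * 2 ^ s)⁻¹ • ρ ≤ μH[s] :=
    inv_smul_le_hausdorffMeasure_of_measure_closedBall_le ρ hC (by positivity : 0 < c * 2⁻¹ ^ N / 2)
      (map_restrict_closedBall_le hf ν (G N) hs hfrost)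
  have hρK : ν (K ∩ G N) ≤ ρ (f '' K) :=
    (Measure.le_restrict_apply _ _).trans
      ((measure_mono (subset_preimage_image f K)).trans (Measure.le_map_apply hf.aemeasurable _))
  intro hzero
  have := (hρ (f '' K)).trans_eq hzero
  rw [Measure.smul_apply, smul_eq_mul, nonpos_iff_eq_zero, mul_eq_zero,
    ENNReal.inv_eq_zero] at this
  exact this.elim hC (fun h0 => hN (le_zero_iff.1 (h0 ▸ hρK)))

theorem prod_apply_le_of_measure_setOf_le {X Y : Type*} [MeasurableSpace X] [MeasurableSpace Y]
    {μ : Measure X} {ν : Measure Y} [SFinite μ] [SFinite ν] {E : Set (X × Y)}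
    (hE : MeasurableSet E) {ε : ℝ≥0∞} (h : ν {y | ε ≤ μ ((·, y) ⁻¹' E)} ≤ ε) :
    μ.prod ν E ≤ ε * (μ univ + ν univ) := by
  set B := {y | ε ≤ μ ((·, y) ⁻¹' E)}
  have hB : MeasurableSet B := measurableSet_le measurable_const (measurable_measure_prodMk_right hE)
  rw [Measure.prod_apply_symm hE]
  calc ∫⁻ y, μ ((·, y) ⁻¹' E) ∂ν ≤ ∫⁻ y, (B.indicator (fun _ => μ univ) y + ε) ∂ν := by
        refine lintegral_mono fun y => ?_
        by_cases hy : y ∈ B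
        · rw [indicator_of_mem hy]
          exact le_add_right (measure_mono (subset_univ _))
        · rw [indicator_of_notMem hy, zero_add]
          exact (not_le.1 hy).le
    _ = μ univ * ν B + ε * ν univ := by
        rw [lintegral_add_right _ measurable_const, lintegral_indicator_const hB, lintegral_const]
    _ ≤ μ univ * ε + ε * ν univ := by gcongr
    _ = ε * (μ univ + ν univ) := by ring

/-- Borel–Cantelli in the product, read off fibrewise. -/
theorem ae_ae_eventually_notMem_of_measure_setOf_le {X Y : Type*} [MeasurableSpace X]
    [MeasurableSpace Y] {μ : Measure X} {ν : Measure Y} [IsFiniteMeasure μ] [IsFiniteMeasure ν]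
    {E : ℕ → Set (X × Y)} (hE : ∀ k, MeasurableSet (E k)) {ε : ℕ → ℝ≥0∞}
    (hε : ∑' k, ε k ≠ ∞) (h : ∀ k, ν {y | ε k ≤ μ ((·, y) ⁻¹' E k)} ≤ ε k) :
    ∀ᵐ θ ∂μ, ∀ᵐ y ∂ν, ∀ᶠ k in atTop, (θ, y) ∉ E k := by
  refine Measure.ae_ae_of_ae_prod (ae_eventually_notMem (ne_top_of_le_ne_top ?_
    (ENNReal.tsum_le_tsum fun k => prod_apply_le_of_measure_setOf_le (hE k) (h k))))
  rw [ENNReal.tsum_mul_right]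
  exact ENNReal.mul_ne_top hε (ENNReal.add_ne_top.2 ⟨measure_ne_top μ _, measure_ne_top ν _⟩)

theorem measurable_measure_preimage_closedBall {X Y : Type*} [TopologicalSpace X]
    [SecondCountableTopology X] [MeasurableSpace X] [BorelSpace X] [MetricSpace Y]
    [SecondCountableTopology Y] [MeasurableSpace Y] [BorelSpace Y] (ν : Measure Y) [SFinite ν]
    {π : X → Y → Y} (hπ : Continuous fun p : X × Y => π p.1 p.2) (δ : ℝ) :
    Measurable fun p : X × Y => ν (π p.1 ⁻¹' closedBall (π p.1 p.2) δ) := by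
  have hclosed : IsClosed {q : (X × Y) × Y | dist (π q.1.1 q.2) (π q.1.1 q.1.2) ≤ δ} :=
    isClosed_le ((hπ.comp (continuous_fst.fst.prodMk continuous_snd)).dist
      (hπ.comp continuous_fst)) continuous_const
  exact measurable_measure_prodMk_left hclosed.measurableSet

theorem tsum_ofReal_geometric_rpow_ne_top {c η : ℝ} (hc : 0 ≤ c) (hη : 0 < η) :
    ∑' k : ℕ, ENNReal.ofReal ((c * 2⁻¹ ^ k) ^ η) ≠ ∞ := by
  have hgeom : ∀ k : ℕ, (c * 2⁻¹ ^ k) ^ η = c ^ η * ((2⁻¹ : ℝ) ^ η) ^ k := fun k => by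
    rw [Real.mul_rpow hc (by positivity), Real.rpow_pow_comm (by norm_num)]
  have hsum : Summable fun k : ℕ => (c * 2⁻¹ ^ k) ^ η := by
    simp_rw [hgeom]
    exact (summable_geometric_of_lt_one (by positivity)
      (Real.rpow_lt_one (by norm_num) (by norm_num) hη)).mul_left _
  rw [← ENNReal.ofReal_tsum_of_nonneg (fun k => by positivity) hsum]
  exact ENNReal.ofReal_ne_top

theorem stmt_16_general {X Y : Type} [MetricSpace X] [CompactSpace X]
    [MetricSpace Y] [TopologicalSpace.SeparableSpace Y]
    [MeasurableSpace X] [BorelSpace X] [MeasurableSpace Y] [BorelSpace Y]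
    (μ : Measure X) [IsFiniteMeasure μ]
    (ν : Measure Y) [IsFiniteMeasure ν] (hν : ν ≠ 0)
    (π : X → Y → Y) (hπ : Continuous fun p : X × Y => π p.1 p.2)
    (s : ℝ) (hs : 0 < s)
    (η δ₀ : ℝ) (hη : 0 < η) (hδ₀ : 0 < δ₀)
    (h : ∀ δ : ℝ, δ ∈ Set.Ioo 0 δ₀ →
      ν {y : Y | ENNReal.ofReal (δ ^ η) ≤
          μ {θ : X | ENNReal.ofReal (δ ^ s) ≤
              ν (π θ ⁻¹' Metric.closedBall (π θ y) δ)}} ≤ ENNReal.ofReal (δ ^ η)) :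
    ∀ᵐ θ ∂μ, ENNReal.ofReal s ≤ dimH (π θ '' measSupp ν) := by
  have : SecondCountableTopology Y := UniformSpace.secondCountable_of_separable Y
  set δ : ℕ → ℝ := fun k => δ₀ / 2 * 2⁻¹ ^ k
  have hδ : ∀ k, δ k ∈ Ioo 0 δ₀ := fun k => ⟨by positivity, calc
    δ k ≤ δ₀ / 2 * 1 := mul_le_mul_of_nonneg_left (pow_le_one₀ (by norm_num) (by norm_num))
      (by positivity)
    _ < δ₀ := by linarith⟩
  set E : ℕ → Set (X × Y) := fun k =>
    {p | ENNReal.ofReal (δ k ^ s) ≤ ν (π p.1 ⁻¹' closedBall (π p.1 p.2) (δ k))}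
  have hE : ∀ k, MeasurableSet (E k) := fun k =>
    measurableSet_le measurable_const (measurable_measure_preimage_closedBall ν hπ (δ k))
  filter_upwards [ae_ae_eventually_notMem_of_measure_setOf_le hE
    (tsum_ofReal_geometric_rpow_ne_top (half_pos hδ₀).le hη) fun k => h (δ k) (hδ k)] with θ hθ
  have hK : ν (measSupp ν) ≠ 0 := by
    rwa [measSupp_eq_support, measure_congr (ae_eq_univ.2 Measure.measure_compl_support),
      Measure.measure_univ_ne_zero]
  have hH := hausdorffMeasure_image_ne_zero_of_ae_eventually_le
    (hπ.comp (Continuous.prodMk_right θ)).measurable (half_pos hδ₀) hs.le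
    (hθ.mono fun y hy => hy.mono fun k hk => by
      rw [ENNReal.ofReal_rpow_of_nonneg (hδ k).1.le hs.le]
      exact (not_le.1 hk).le) hK
  rw [← Real.coe_toNNReal s hs.le] at hH
  exact le_dimH_of_hausdorffMeasure_ne_zero hH

/-- Abstract projection lemma: a quantitative restriction on the failure of the
s-Frostman condition for the pushforwards implies dim π_θ(supp ν) ≥ s for μ-a.e. θ. -/
theorem stmt_16 {X Y : Type} [MetricSpace X] [CompactSpace X]
    [MetricSpace Y] [TopologicalSpace.SeparableSpace Y]
    [MeasurableSpace X] [BorelSpace X] [MeasurableSpace Y] [BorelSpace Y]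
    (μ : Measure X) [IsFiniteMeasure μ]
    (ν : Measure Y) [IsFiniteMeasure ν] (hν : ν ≠ 0)
    (hcs : IsCompact (measSupp ν))
    (π : X → Y → Y) (hπ : Continuous fun p : X × Y => π p.1 p.2)
    (s : ℝ) (hs : 0 < s)
    (η δ₀ : ℝ) (hη : 0 < η) (hδ₀ : 0 < δ₀)
    (h : ∀ δ : ℝ, δ ∈ Set.Ioo 0 δ₀ →
      ν {y : Y | ENNReal.ofReal (δ ^ η) ≤
          μ {θ : X | ENNReal.ofReal (δ ^ s) ≤
              ν (π θ ⁻¹' Metric.closedBall (π θ y) δ)}} ≤ ENNReal.ofReal (δ ^ η)) :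
    ∀ᵐ θ ∂μ, ENNReal.ofReal s ≤ dimH (π θ '' measSupp ν) :=
  stmt_16_general μ ν hν π hπ s hs η δ₀ hη hδ₀ h
end
end
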